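/- arXiv:1809.04003 — 5 statements merged into one kernel-verified Lean document; each statement's English description precedes it below -/
import Mathlib

section
/- Let K be a group acting on a set M, let L ≤ K be a subgroup, and let N ⊆ M be a subset invariant under L (i.e., l • p ∈ N for all l ∈ L and p ∈ N). Then the map from the quotient of N by the orbit equivalence relation of the induced L-action to the quotient of M by the orbit equivalence relation of the K-action, sending the L-orbit of p ∈ N to the K-orbit of p, is well-defined and it is injective if and only if N is an L-subset of M, i.e., if and only if for every k ∈ K and p ∈ N with k • p ∈ N there exists l ∈ L with l • p = k • p. -/
theorem Quot.map_injective_iff {α β : Type*} {r : α → α → Prop} {s : β → β → Prop}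
    (hr : Equivalence r) (hs : Equivalence s) (f : α → β) (hf : ∀ ⦃a b⦄, r a b → s (f a) (f b)) :
    Function.Injective (Quot.map f hf) ↔ ∀ a b, s (f a) (f b) → r a b := by
  refine ⟨fun hinj a b hab => (hr.quot_mk_eq_iff a b).mp (hinj (Quot.sound hab)), ?_⟩
  intro hreflects x y
  induction x using Quot.ind with | _ a => ?_
  induction y using Quot.ind with | _ b => ?_
  intro hab
  exact Quot.sound (hreflects a b ((hs.quot_mk_eq_iff _ _).mp hab))

theorem MulAction.equivalence_exists_smul_eq (G α : Type*) [Group G] [MulAction G α] :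
    Equivalence (fun a b : α => ∃ g : G, g • a = b) where
  refl a := ⟨1, one_smul G a⟩
  symm := fun ⟨g, h⟩ => ⟨g⁻¹, by rw [← h, inv_smul_smul]⟩
  trans := fun ⟨g, h⟩ ⟨g', h'⟩ => ⟨g' * g, by rw [mul_smul, h, h']⟩

theorem Subgroup.equivalence_exists_mem_smul_eq {K M : Type*} [Group K] [MulAction K M]
    (L : Subgroup K) (N : Set M) :
    Equivalence (fun p q : N => ∃ l ∈ L, l • (p : M) = (q : M)) := by
  simpa only [Function.onFun, Subtype.exists, Subgroup.mk_smul, exists_prop] using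
    (MulAction.equivalence_exists_smul_eq L M).comap ((↑) : N → M)

theorem stmt5_general {K M : Type*} [Group K] [MulAction K M] (L : Subgroup K) (N : Set M) :
    ∃ F : Quot (fun p q : N => ∃ l ∈ L, l • (p : M) = (q : M)) →
        Quot (fun p q : M => ∃ k : K, k • p = q),
      (∀ p : N, F (Quot.mk _ p) = Quot.mk _ (p : M)) ∧
      (Function.Injective F ↔
        ∀ k : K, ∀ p ∈ N, k • p ∈ N → ∃ l ∈ L, l • p = k • p) := by
  have hval : ∀ ⦃p q : N⦄, (∃ l ∈ L, l • (p : M) = (q : M)) → ∃ k : K, k • (p : M) = q :=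
    fun _ _ ⟨l, _, h⟩ => ⟨l, h⟩
  refine ⟨Quot.map (↑) hval, fun _ => rfl, ?_⟩
  rw [Quot.map_injective_iff (L.equivalence_exists_mem_smul_eq N)
    (MulAction.equivalence_exists_smul_eq K M)]
  constructor
  · intro h k p hp hkp
    exact h ⟨p, hp⟩ ⟨k • p, hkp⟩ ⟨k, rfl⟩
  · rintro h p q ⟨k, hkp⟩
    obtain ⟨l, hl, hlp⟩ := h k p p.2 (hkp ▸ q.2)
    exact ⟨l, hl, hlp.trans hkp⟩

/-- For a group `K` acting on `M`, a subgroup `L ≤ K` and an `L`-invariant subset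
`N ⊆ M`, the map `N/L → M/K` sending the `L`-orbit of `p ∈ N` to its `K`-orbit is
well defined, and it is injective if and only if `N` is an `L`-subset of `M`. -/
theorem stmt5 {K M : Type*} [Group K] [MulAction K M] (L : Subgroup K) (N : Set M)
    (hinv : ∀ l ∈ L, ∀ p ∈ N, l • p ∈ N) :
    ∃ F : Quot (fun p q : N => ∃ l ∈ L, l • (p : M) = (q : M)) →
        Quot (fun p q : M => ∃ k : K, k • p = q),
      (∀ p : N, F (Quot.mk _ p) = Quot.mk _ (p : M)) ∧
      (Function.Injective F ↔
        ∀ k : K, ∀ p ∈ N, k • p ∈ N → ∃ l ∈ L, l • p = k • p) :=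
  stmt5_general L N
end

section
/- Let K be a group acting on a set M, let L ≤ K be a subgroup, and let N ⊆ M be a subset invariant under L. Then N is a full L-subset of M (for every k ∈ K and p ∈ N with k • p ∈ N one has k ∈ L) if and only if N is an L-subset of M (for every k ∈ K and p ∈ N with k • p ∈ N there exists l ∈ L with l • p = k • p) and for every p ∈ N the stabilizer of p in K is contained in L (every k ∈ K with k • p = p lies in L). -/
theorem Subgroup.mem_of_smul_eq_smul_of_stabilizer_le {K M : Type*} [Group K] [MulAction K M]
    {L : Subgroup K} {p : M} (hstab : MulAction.stabilizer K p ≤ L) {k l : K} (hl : l ∈ L)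
    (hlk : l • p = k • p) : k ∈ L := by
  have hstabilizes : l⁻¹ * k ∈ MulAction.stabilizer K p := by
    rw [MulAction.mem_stabilizer_iff, mul_smul, ← hlk, inv_smul_smul]
  simpa using L.mul_mem hl (hstab hstabilizes)

theorem stmt7_general {K M : Type*} [Group K] [MulAction K M] (L : Subgroup K) (N : Set M) :
    (∀ k : K, ∀ p ∈ N, k • p ∈ N → k ∈ L) ↔
      ((∀ k : K, ∀ p ∈ N, k • p ∈ N → ∃ l ∈ L, l • p = k • p) ∧
        ∀ p ∈ N, ∀ k : K, k • p = p → k ∈ L) := by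
  constructor
  · intro hfull
    exact ⟨fun k p hp hkp => ⟨k, hfull k p hp hkp, rfl⟩,
      fun p hp k hk => hfull k p hp (by rwa [hk])⟩
  · rintro ⟨hsubset, hstab⟩ k p hp hkp
    obtain ⟨l, hl, hlk⟩ := hsubset k p hp hkp
    exact L.mem_of_smul_eq_smul_of_stabilizer_le (fun g hg => hstab p hp g hg) hl hlk

/-- For a group `K` acting on `M`, a subgroup `L ≤ K` and an `L`-invariant subset
`N ⊆ M`: `N` is a full `L`-subset of `M` if and only if `N` is an `L`-subset of `M`
and for every `p ∈ N` the stabilizer of `p` in `K` is contained in `L`. -/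
theorem stmt7 {K M : Type*} [Group K] [MulAction K M] (L : Subgroup K) (N : Set M)
    (hinv : ∀ l ∈ L, ∀ p ∈ N, l • p ∈ N) :
    (∀ k : K, ∀ p ∈ N, k • p ∈ N → k ∈ L) ↔
      ((∀ k : K, ∀ p ∈ N, k • p ∈ N → ∃ l ∈ L, l • p = k • p) ∧
        ∀ p ∈ N, ∀ k : K, k • p = p → k ∈ L) :=
  stmt7_general L N
end

section
/- Let G and G′ be groups acting on sets M and M′ respectively, let φ : G → G′ be a group homomorphism, and let f : M → M′ be φ-equivariant, i.e., f(g • p) = φ(g) • f(p) for all g ∈ G and p ∈ M. Let Δ = {(g, φ(g)) : g ∈ G}, a subgroup of G × G′. Then the graph of f, gr f = {(p, f(p)) : p ∈ M} ⊆ M × M′, is invariant under Δ with respect to the componentwise action of G × G′ on M × M′, and gr f is a Δ-subset of M × M′: for every (γ, γ′) ∈ G × G′ and every (p, q) ∈ gr f with (γ • p, γ′ • q) ∈ gr f, there exists δ ∈ Δ with δ • (p, q) = (γ • p, γ′ • q). -/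
section EquivariantGraph

variable {G G' M M' : Type*} [Monoid G] [Monoid G'] [MulAction G M] [MulAction G' M']
  {φ : G →* G'} {f : M → M'}

theorem smul_snd_eq_of_snd_eq (heq : ∀ (g : G) (p : M), f (g • p) = φ g • f p)
    {x : M × M'} (hx : x.2 = f x.1) (g : G) : φ g • x.2 = f (g • x.1) := by
  rw [heq, hx]

theorem smul_snd_eq_map_smul_snd (heq : ∀ (g : G) (p : M), f (g • p) = φ g • f p)
    {x : M × M'} (hx : x.2 = f x.1) {γ : G} {γ' : G'} (hγ : γ' • x.2 = f (γ • x.1)) :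
    φ γ • x.2 = γ' • x.2 := by
  rw [hγ, smul_snd_eq_of_snd_eq heq hx]

end EquivariantGraph

/-- Let `G`, `G'` act on `M`, `M'`, let `φ : G →* G'` and let `f : M → M'` be
`φ`-equivariant. With respect to the componentwise action of `G × G'` on `M × M'`,
the graph of `f` is invariant under the graph subgroup `Δ = {(g, φ g) : g ∈ G}` and
is a `Δ`-subset of `M × M'`: whenever `(γ, γ') ∈ G × G'` moves a point of the graph
to a point of the graph, some element `(δ, φ δ) ∈ Δ` moves it to the same point. -/
theorem stmt8 {G G' M M' : Type*} [Group G] [Group G']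
    [MulAction G M] [MulAction G' M'] (φ : G →* G') (f : M → M')
    (heq : ∀ (g : G) (p : M), f (g • p) = φ g • f p) :
    (∀ (g : G) (x : M × M'), x ∈ {y : M × M' | y.2 = f y.1} →
        (g • x.1, φ g • x.2) ∈ {y : M × M' | y.2 = f y.1}) ∧
    (∀ (γ : G) (γ' : G') (x : M × M'), x ∈ {y : M × M' | y.2 = f y.1} →
        (γ • x.1, γ' • x.2) ∈ {y : M × M' | y.2 = f y.1} →
        ∃ δ : G, (δ • x.1, φ δ • x.2) = (γ • x.1, γ' • x.2)) :=
  ⟨fun g _ hx => smul_snd_eq_of_snd_eq heq hx g,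
    fun γ _ _ hx hγ => ⟨γ, Prod.ext rfl (smul_snd_eq_map_smul_snd heq hx hγ)⟩⟩
end

section
/- Let M be a Hausdorff, first-countable topological space and let Γ be a finite group acting on M by homeomorphisms (a continuous action). Let Δ ≤ Γ be a subgroup and let N₂ ⊆ M be a closed Δ-subset of M: N₂ is Δ-invariant and for every γ ∈ Γ and q ∈ N₂ with γ • q ∈ N₂ there exists δ ∈ Δ with δ • q = γ • q. Suppose N₁ ⊆ M satisfies: for every q ∈ N₁ there exists γ ∈ Γ with γ • q ∈ N₂. Let p ∈ N₁ have trivial stabilizer in Γ (γ • p = p implies γ = e) and let γₚ ∈ Γ satisfy γₚ • p ∈ N₂. Then there is a relatively open neighborhood U of p in N₁ such that γₚ • U ⊆ N₂. -/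
/-!
The points `q` with `γₚ • q ∉ N₂` cannot accumulate at `p`. Since `Γ` is finite, such points
would accumulate along a set on which one fixed `γ` moves them into `N₂`, and as `N₂` is closed,
`γ • p ∈ N₂`. The `Δ`-subset property relates `γ • p` and `γₚ • p` by some `δ ∈ Δ`, and freeness
at `p` upgrades this to `γₚ = δ * γ`; then `Δ`-invariance puts `γₚ • q = δ • γ • q` in `N₂`.
-/

theorem exists_mem_closure_sep_smul_mem {Γ M : Type*} [TopologicalSpace M] [Finite Γ]
    [SMul Γ M] [ContinuousConstSMul Γ M] {N S : Set M} (hN : IsClosed N)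
    (hS : ∀ q ∈ S, ∃ γ : Γ, γ • q ∈ N) {p : M} (hp : p ∈ closure S) :
    ∃ γ : Γ, γ • p ∈ N ∧ p ∈ closure {q ∈ S | γ • q ∈ N} := by
  have hcover : S ⊆ ⋃ γ : Γ, {q ∈ S | γ • q ∈ N} := fun q hq ↦
    Set.mem_iUnion.2 <| (hS q hq).imp fun _ hγ ↦ ⟨hq, hγ⟩
  have hp' := closure_mono hcover hp
  rw [closure_iUnion_of_finite] at hp'
  obtain ⟨γ, hγ⟩ := Set.mem_iUnion.1 hp'
  refine ⟨γ, ?_, hγ⟩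
  exact hN.closure_subset <| map_mem_closure (continuous_const_smul γ) hγ fun _ hq ↦ hq.2

theorem exists_mem_eq_mul_of_smul_mem {Γ M : Type*} [Group Γ] [MulAction Γ M]
    {Δ : Subgroup Γ} {N : Set M} (hsub : ∀ γ : Γ, ∀ q ∈ N, γ • q ∈ N → ∃ δ ∈ Δ, δ • q = γ • q)
    {p : M} (hstab : ∀ γ : Γ, γ • p = p → γ = 1) {γ γ' : Γ} (h : γ • p ∈ N)
    (h' : γ' • p ∈ N) : ∃ δ ∈ Δ, γ' = δ * γ := by
  obtain ⟨δ, hδ, hδγ⟩ := hsub (γ' * γ⁻¹) (γ • p) h (by rwa [smul_smul, inv_mul_cancel_right])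
  refine ⟨δ, hδ, inv_mul_eq_one.1 <| hstab _ ?_⟩
  rw [mul_smul, mul_smul, hδγ, smul_smul, smul_smul, inv_mul_cancel_left, inv_mul_cancel, one_smul]

theorem stmt10_general {M Γ : Type*} [TopologicalSpace M] [Group Γ] [Finite Γ] [MulAction Γ M]
    [ContinuousConstSMul Γ M] (Δ : Subgroup Γ) (N₁ N₂ : Set M)
    (hclosed : IsClosed N₂)
    (hinv : ∀ δ ∈ Δ, ∀ q ∈ N₂, δ • q ∈ N₂)
    (hsub : ∀ γ : Γ, ∀ q ∈ N₂, γ • q ∈ N₂ → ∃ δ ∈ Δ, δ • q = γ • q)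
    (hN₁ : ∀ q ∈ N₁, ∃ γ : Γ, γ • q ∈ N₂)
    (p : M) (hstab : ∀ γ : Γ, γ • p = p → γ = 1)
    (γₚ : Γ) (hγₚ : γₚ • p ∈ N₂) :
    ∃ V : Set M, IsOpen V ∧ p ∈ V ∧ ∀ q ∈ V ∩ N₁, γₚ • q ∈ N₂ := by
  set bad := {q ∈ N₁ | γₚ • q ∉ N₂}
  have hp : p ∉ closure bad := by
    intro hp
    obtain ⟨γ, hγp, hγ⟩ := exists_mem_closure_sep_smul_mem hclosed
      (fun q hq ↦ hN₁ q hq.1) hp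
    obtain ⟨q, ⟨-, hq⟩, hγq⟩ := closure_nonempty_iff.1 ⟨p, hγ⟩
    obtain ⟨δ, hδ, rfl⟩ := exists_mem_eq_mul_of_smul_mem hsub hstab hγp hγₚ
    exact hq <| mul_smul δ γ q ▸ hinv δ hδ _ hγq
  refine ⟨(closure bad)ᶜ, isClosed_closure.isOpen_compl, hp, fun q ⟨hqV, hq⟩ ↦ ?_⟩
  by_contra hγq
  exact hqV <| subset_closure ⟨hq, hγq⟩

/-- Local step of Lemma 5 of the paper: `M` Hausdorff first-countable, `Γ` a finite
group acting continuously on `M`, `N₂` a closed `Δ`-subset for a subgroup `Δ ≤ Γ`,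
`N₁` a set each of whose points can be moved into `N₂` by the `Γ`-action. If
`p ∈ N₁` has trivial stabilizer and `γₚ • p ∈ N₂`, then there is a relatively open
neighborhood `U` of `p` in `N₁` with `γₚ • U ⊆ N₂`. -/
theorem stmt10 {M Γ : Type*} [TopologicalSpace M] [T2Space M]
    [FirstCountableTopology M] [Group Γ] [Finite Γ] [MulAction Γ M]
    [ContinuousConstSMul Γ M] (Δ : Subgroup Γ) (N₁ N₂ : Set M)
    (hclosed : IsClosed N₂)
    (hinv : ∀ δ ∈ Δ, ∀ q ∈ N₂, δ • q ∈ N₂)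
    (hsub : ∀ γ : Γ, ∀ q ∈ N₂, γ • q ∈ N₂ → ∃ δ ∈ Δ, δ • q = γ • q)
    (hN₁ : ∀ q ∈ N₁, ∃ γ : Γ, γ • q ∈ N₂)
    (p : M) (hp : p ∈ N₁) (hstab : ∀ γ : Γ, γ • p = p → γ = 1)
    (γₚ : Γ) (hγₚ : γₚ • p ∈ N₂) :
    ∃ V : Set M, IsOpen V ∧ p ∈ V ∧ ∀ q ∈ V ∩ N₁, γₚ • q ∈ N₂ :=
  stmt10_general Δ N₁ N₂ hclosed hinv hsub hN₁ p hstab γₚ hγₚ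
end

section
/- Let M be a Hausdorff, first-countable topological space and let Γ be a finite group acting on M by homeomorphisms (a continuous action). Let Δ ≤ Γ be a subgroup and let N₂ ⊆ M be a closed Δ-subset of M: N₂ is Δ-invariant and for every γ ∈ Γ and q ∈ N₂ with γ • q ∈ N₂ there exists δ ∈ Δ with δ • q = γ • q. Let N₁ ⊆ M be a subset such that for every q ∈ N₁ there exists γ ∈ Γ with γ • q ∈ N₂ (i.e., the image of N₁ in M/Γ is contained in that of N₂), and such that N₁′ := {p ∈ N₁ : the stabilizer of p in Γ is trivial} is dense in N₁ (with respect to the subspace topology on N₁) and path-connected. Then there exists γ ∈ Γ such that γ • N₁ ⊆ N₂. -/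
/-!
At a point `p` with trivial stabilizer, the elements `γ` with `γ • p ∈ N₂` form a single right
coset of `Δ`, because `N₂` is a `Δ`-subset. Fix `γ₀` that works at one such point. The points of
`N₁′` where `γ₀` works and those where some `γ ∉ Δ γ₀` works are covered by finitely many closed
translates of `N₂`, cover `N₁′`, and do not meet; by connectedness `γ₀` works on all of `N₁′`,
and then on its closure since `N₂` is closed.
-/

open Set

theorem IsPreconnected.subset_of_isClosed_cover {X : Type*} [TopologicalSpace X] {S A B : Set X}
    (hS : IsPreconnected S) (hA : IsClosed A) (hB : IsClosed B) (hcover : S ⊆ A ∪ B)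
    (hdisj : S ∩ (A ∩ B) = ∅) (hne : (S ∩ A).Nonempty) : S ⊆ A := by
  intro q hq
  by_contra hqA
  have hqB : q ∈ B := (hcover hq).resolve_left hqA
  exact (isPreconnected_closed_iff.1 hS A B hA hB hcover hne ⟨q, hq, hqB⟩).ne_empty hdisj

section SubgroupSubset

variable {M Γ : Type*} [Group Γ] [MulAction Γ M] {Δ : Subgroup Γ} {N : Set M}

theorem smul_mem_of_mul_inv_mem (hinv : ∀ δ ∈ Δ, ∀ q ∈ N, δ • q ∈ N) {γ γ₀ : Γ} {p : M}
    (hγ : γ * γ₀⁻¹ ∈ Δ) (h : γ • p ∈ N) : γ₀ • p ∈ N := by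
  simpa [mul_smul] using hinv _ (inv_mem hγ) _ h

theorem mul_inv_mem_of_smul_mem (hsub : ∀ γ : Γ, ∀ q ∈ N, γ • q ∈ N → ∃ δ ∈ Δ, δ • q = γ • q)
    {p : M} (hp : ∀ γ : Γ, γ • p = p → γ = 1) {γ γ' : Γ} (h : γ • p ∈ N) (h' : γ' • p ∈ N) :
    γ' * γ⁻¹ ∈ Δ := by
  obtain ⟨δ, hδ, hδp⟩ := hsub (γ' * γ⁻¹) (γ • p) h (by simpa [mul_smul] using h')
  have hfix : (γ'⁻¹ * δ * γ) • p = p := by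
    rw [mul_smul, mul_smul, hδp, ← mul_smul, ← mul_smul]
    simp
  have hδ_eq : δ = γ' * γ⁻¹ := by
    have := hp _ hfix
    rw [mul_assoc, inv_mul_eq_one] at this
    rw [this, mul_inv_cancel_right]
  exact hδ_eq ▸ hδ

theorem smul_mem_of_isPreconnected [TopologicalSpace M] [Finite Γ] [ContinuousConstSMul Γ M]
    (hclosed : IsClosed N) (hinv : ∀ δ ∈ Δ, ∀ q ∈ N, δ • q ∈ N)
    (hsub : ∀ γ : Γ, ∀ q ∈ N, γ • q ∈ N → ∃ δ ∈ Δ, δ • q = γ • q) {S : Set M}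
    (hS : IsPreconnected S) (hfree : ∀ p ∈ S, ∀ γ : Γ, γ • p = p → γ = 1)
    (hmove : ∀ p ∈ S, ∃ γ : Γ, γ • p ∈ N) {γ₀ : Γ} {p₀ : M} (hp₀ : p₀ ∈ S)
    (hγ₀ : γ₀ • p₀ ∈ N) : ∀ p ∈ S, γ₀ • p ∈ N := by
  have hclosed_preimage (γ : Γ) : IsClosed ((γ • ·) ⁻¹' N) :=
    hclosed.preimage (continuous_const_smul γ)
  let B := ⋃ γ ∈ {γ : Γ | γ * γ₀⁻¹ ∉ Δ}, (γ • ·) ⁻¹' N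
  have hcover : S ⊆ (γ₀ • ·) ⁻¹' N ∪ B := by
    intro p hp
    obtain ⟨γ, hγ⟩ := hmove p hp
    by_cases hcoset : γ * γ₀⁻¹ ∈ Δ
    · exact .inl (smul_mem_of_mul_inv_mem hinv hcoset hγ)
    · exact .inr (mem_biUnion hcoset hγ)
  have hdisj : S ∩ ((γ₀ • ·) ⁻¹' N ∩ B) = ∅ := by
    refine eq_empty_of_forall_notMem fun p ⟨hp, hpA, hpB⟩ => ?_
    obtain ⟨γ, hγ, hγp⟩ := mem_iUnion₂.1 hpB
    exact hγ (mul_inv_mem_of_smul_mem hsub (hfree p hp) hpA hγp)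
  exact hS.subset_of_isClosed_cover (hclosed_preimage γ₀)
    ((toFinite _).isClosed_biUnion fun γ _ => hclosed_preimage γ) hcover hdisj ⟨p₀, hp₀, hγ₀⟩

end SubgroupSubset

theorem stmt11_general {M Γ : Type*} [TopologicalSpace M] [Group Γ] [Finite Γ] [MulAction Γ M]
    [ContinuousConstSMul Γ M] (Δ : Subgroup Γ) (N₁ N₂ : Set M)
    (hclosed : IsClosed N₂)
    (hinv : ∀ δ ∈ Δ, ∀ q ∈ N₂, δ • q ∈ N₂)
    (hsub : ∀ γ : Γ, ∀ q ∈ N₂, γ • q ∈ N₂ → ∃ δ ∈ Δ, δ • q = γ • q)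
    (hN₁ : ∀ q ∈ N₁, ∃ γ : Γ, γ • q ∈ N₂)
    (hdense : N₁ ⊆ closure {p ∈ N₁ | ∀ γ : Γ, γ • p = p → γ = 1})
    (hconn : IsPathConnected {p ∈ N₁ | ∀ γ : Γ, γ • p = p → γ = 1}) :
    ∃ γ : Γ, ∀ p ∈ N₁, γ • p ∈ N₂ := by
  obtain ⟨p₀, hp₀⟩ := hconn.nonempty
  obtain ⟨γ₀, hγ₀⟩ := hN₁ p₀ hp₀.1
  have hfree_subset : {p ∈ N₁ | ∀ γ : Γ, γ • p = p → γ = 1} ⊆ (γ₀ • ·) ⁻¹' N₂ :=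
    smul_mem_of_isPreconnected hclosed hinv hsub hconn.isConnected.isPreconnected
      (fun _ hp => hp.2) (fun p hp => hN₁ p hp.1) hp₀ hγ₀
  exact ⟨γ₀, fun p hp =>
    (hclosed.preimage (continuous_const_smul γ₀)).closure_subset_iff.2 hfree_subset (hdense hp)⟩

/-- Lemma 5 of the paper: `M` Hausdorff first-countable, `Γ` a finite group acting
continuously on `M`, `N₂` a closed `Δ`-subset for a subgroup `Δ ≤ Γ`, and `N₁` a set
each of whose points can be moved into `N₂` by the `Γ`-action, such that the set
`N₁′` of points of `N₁` with trivial stabilizer is dense in `N₁` and path-connected.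
Then some single `γ ∈ Γ` moves all of `N₁` into `N₂`. -/
theorem stmt11 {M Γ : Type*} [TopologicalSpace M] [T2Space M]
    [FirstCountableTopology M] [Group Γ] [Finite Γ] [MulAction Γ M]
    [ContinuousConstSMul Γ M] (Δ : Subgroup Γ) (N₁ N₂ : Set M)
    (hclosed : IsClosed N₂)
    (hinv : ∀ δ ∈ Δ, ∀ q ∈ N₂, δ • q ∈ N₂)
    (hsub : ∀ γ : Γ, ∀ q ∈ N₂, γ • q ∈ N₂ → ∃ δ ∈ Δ, δ • q = γ • q)
    (hN₁ : ∀ q ∈ N₁, ∃ γ : Γ, γ • q ∈ N₂)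
    (hdense : N₁ ⊆ closure {p ∈ N₁ | ∀ γ : Γ, γ • p = p → γ = 1})
    (hconn : IsPathConnected {p ∈ N₁ | ∀ γ : Γ, γ • p = p → γ = 1}) :
    ∃ γ : Γ, ∀ p ∈ N₁, γ • p ∈ N₂ :=
  stmt11_general Δ N₁ N₂ hclosed hinv hsub hN₁ hdense hconn
end
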